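/- Convergence theorem for trajectory likelihood maximization: suppose (1) the backward policy sequence is stable, i.e., sup_{t≥0} ‖P_B^T − P_B^{T+t}‖_1 → 0 as T → ∞ (Cauchy), and (2) the average regret (1/T) Σ_{t=1}^T KL(P^{P_F^t} ‖ P^{P_B^t}) → 0 as T → ∞. Then there exists a forward policy P_F* whose trajectory distribution satisfies trajectory balance (hence induces the marginal R(x)/Z on terminal states) such that (1/T) Σ_{t=1}^T P^{P_F^t} → P^{P_F*} as T → ∞. -/

import Mathlib

open scoped BigOperators Classical ENNReal

noncomputable section

def pairProd {S : Type*} (f : S → S → ℝ) : List S → ℝ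
  | [] => 1
  | [_] => 1
  | a :: b :: l => f a b * pairProd f (b :: l)

def IsForwardPolicy {S : Type*} [Fintype S] (E : S → S → Prop) (term : S → Prop)
    (PF : S → S → ℝ) : Prop :=
  (∀ s s', 0 ≤ PF s s') ∧ (∀ s s', PF s s' ≠ 0 → E s s') ∧
    (∀ s, ¬ term s → ∑ s' : S, PF s s' = 1)

def IsBackwardPolicy {S : Type*} [Fintype S] (E : S → S → Prop) (s0 : S)
    (PB : S → S → ℝ) : Prop :=
  (∀ s' s, 0 ≤ PB s' s) ∧ (∀ s' s, PB s' s ≠ 0 → E s s') ∧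
    (∀ s', s' ≠ s0 → ∑ s : S, PB s' s = 1)

def bTraj {S : Type*} (R : S → ℝ) (Z : ℝ) (PB : S → S → ℝ) (l : List S) : ℝ :=
  ((l.getLast?.map R).getD 0 / Z) * pairProd (fun a b => PB b a) l

def klDivFin {α : Type*} (A : Finset α) (p q : α → ℝ) : ℝ≥0∞ :=
  if ∀ a ∈ A, q a = 0 → p a = 0 then
    ENNReal.ofReal (∑ a ∈ A, p a * Real.log (p a / q a))
  else ⊤

/-!
The stable sequence `PB^t` is Cauchy, so it converges to a backward policy `PB*`. Write the
backward weight of a complete trajectory as `P^{PB}`. Since `PB` is a forward policy on the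
reversed DAG that stops at `s0`, `P^{PB}` is a probability distribution with terminal marginal
`R / Z`. It is realised by a forward policy: with the state flow `F(s)` (the total weight of the
complete trajectories from `s`), `PF*(s → s') = PB*(s' → s) F(s') / F(s)` satisfies trajectory
balance. By Pinsker's inequality and Jensen's inequality, a vanishing average regret makes the
Cesàro mean of `‖P^{PF^t} - P^{PB^t}‖₁` vanish, and `‖P^{PB^t} - P^{PB*}‖₁ → 0` by continuity;
convexity of the `L¹` norm then gives the convergence of the Cesàro averages of `P^{PF^t}` to
`P^{PB*} = P^{PF*}`.
-/

open Finset Filter Topology Real InformationTheory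

section PathProducts
variable {S : Type*}

lemma pairProd_nonneg {f : S → S → ℝ} (hf : ∀ a b, 0 ≤ f a b) : ∀ l : List S, 0 ≤ pairProd f l
  | [] | [_] => zero_le_one
  | a :: b :: l => mul_nonneg (hf a b) (pairProd_nonneg hf (b :: l))

lemma pairProd_cons_of_head? (f : S → S → ℝ) (a : S) {b : S} {l : List S}
    (hl : l.head? = some b) : pairProd f (a :: l) = f a b * pairProd f l := by
  cases l with
  | nil => cases hl
  | cons c l => cases hl; rfl

lemma pairProd_append_pair (f : S → S → ℝ) (a b : S) : ∀ l : List S,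
    pairProd f (l ++ [a, b]) = pairProd f (l ++ [a]) * f a b
  | [] => by simp [pairProd]
  | [c] => by simp [pairProd]
  | c :: d :: l => by
    simp only [List.cons_append, pairProd]
    rw [← List.cons_append, pairProd_append_pair f a b (d :: l), List.cons_append]
    ring

lemma pairProd_reverse (f : S → S → ℝ) : ∀ l : List S,
    pairProd f l.reverse = pairProd (fun a b => f b a) l
  | [] | [_] => rfl
  | a :: b :: l => by
    rw [List.reverse_cons, List.reverse_cons, List.append_assoc, List.singleton_append,
      pairProd_append_pair, ← List.reverse_cons, pairProd_reverse f (b :: l), pairProd, mul_comm]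

lemma continuous_pairProd : ∀ l : List S, Continuous fun f : S → S → ℝ => pairProd f l
  | [] | [_] => continuous_const
  | a :: b :: l => by
    simp only [pairProd]
    exact (continuous_apply_apply a b).mul (continuous_pairProd (b :: l))

lemma continuous_bTraj (R : S → ℝ) (Z : ℝ) (l : List S) :
    Continuous fun PB : S → S → ℝ => bTraj R Z PB l :=
  continuous_const.mul ((continuous_pairProd l).comp (by fun_prop))

end PathProducts

section CompletePaths
variable {S : Type*} (E : S → S → Prop) (halt : S → Prop)

def IsCompletePath (s : S) (l : List S) : Prop :=
  l.head? = some s ∧ l.IsChain E ∧ ∃ x, l.getLast? = some x ∧ halt x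

variable [Fintype S]

def completePaths : ℕ → S → Finset (List S)
  | 0, s => if halt s then {[s]} else ∅
  | n + 1, s => (if halt s then {[s]} else ∅) ∪ (univ.filter (E s)).biUnion
      fun s' => (completePaths n s').map ⟨(s :: ·), List.cons_injective⟩

variable {E halt}

omit [Fintype S] in
lemma isCompletePath_singleton {s a : S} : IsCompletePath E halt s [a] ↔ a = s ∧ halt s := by
  simp only [IsCompletePath, List.head?_cons, Option.some.injEq, List.isChain_singleton,
    List.getLast?_singleton, exists_eq_left', true_and]
  constructor <;> rintro ⟨rfl, h⟩ <;> exact ⟨rfl, h⟩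

omit [Fintype S] in
lemma isCompletePath_cons_cons {s a b : S} {l : List S} :
    IsCompletePath E halt s (a :: b :: l) ↔ a = s ∧ E a b ∧ IsCompletePath E halt b (b :: l) := by
  simp [IsCompletePath, List.isChain_cons_cons, List.getLast?_cons_cons, and_assoc]

lemma mem_completePaths {n : ℕ} {s : S} {l : List S} :
    l ∈ completePaths E halt n s ↔ IsCompletePath E halt s l ∧ l.length ≤ n + 1 := by
  induction n generalizing s l with
  | zero =>
    by_cases hs : halt s <;> rcases l with _ | ⟨a, _ | ⟨b, l⟩⟩ <;>
      simp [completePaths, hs, IsCompletePath] <;> aesop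
  | succ n ih =>
    by_cases hs : halt s <;> rcases l with _ | ⟨a, _ | ⟨b, l⟩⟩ <;>
      simp [completePaths, hs, ih, IsCompletePath] <;> aesop

lemma completePaths_of_halt {s : S} (hs : halt s) (hsucc : ∀ s', ¬E s s') (n : ℕ) :
    completePaths E halt n s = {[s]} := by
  cases n <;> simp [completePaths, hs, hsucc]

lemma sum_completePaths_succ {M : Type*} [AddCommMonoid M] {s : S} (hs : ¬halt s) (n : ℕ)
    (g : List S → M) :
    ∑ l ∈ completePaths E halt (n + 1) s, g l =
      ∑ s' ∈ univ.filter (E s), ∑ l ∈ completePaths E halt n s', g (s :: l) := by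
  rw [completePaths, if_neg hs, empty_union, sum_biUnion]
  · simp only [sum_map, Function.Embedding.coeFn_mk]
  · intro s₁ _ s₂ _ hne
    refine disjoint_left.2 fun l h₁ h₂ => hne ?_
    obtain ⟨l₁, hl₁, rfl⟩ := mem_map.1 h₁
    obtain ⟨l₂, hl₂, hl⟩ := mem_map.1 h₂
    cases List.cons_injective hl
    exact Option.some_injective _
      (((mem_completePaths.1 hl₁).1.1).symm.trans (mem_completePaths.1 hl₂).1.1)

section Ranked
variable {rank : S → ℕ} {N : ℕ} (hrank : ∀ s s', E s s' → rank s < rank s')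
include hrank

omit [Fintype S] in
lemma List.IsChain.length_add_rank_le {l : List S} (hl : l.IsChain E) {s x : S}
    (hs : l.head? = some s) (hx : l.getLast? = some x) : l.length + rank s ≤ rank x + 1 := by
  induction l generalizing s with
  | nil => cases hs
  | cons a l ih =>
    cases hs
    rcases l with _ | ⟨b, l⟩
    · cases hx; simp [add_comm]
    · rw [List.isChain_cons_cons] at hl
      have := ih hl.2 rfl (by rwa [List.getLast?_cons_cons] at hx)
      have := hrank _ _ hl.1
      simp only [List.length_cons] at *
      omega

variable (hN : ∀ s, rank s ≤ N)
include hN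

lemma mem_completePaths_of_le {n : ℕ} {s : S} (hn : N ≤ n + rank s) {l : List S} :
    l ∈ completePaths E halt n s ↔ IsCompletePath E halt s l := by
  refine mem_completePaths.trans (and_iff_left_of_imp fun ⟨hs, hc, x, hx, _⟩ => ?_)
  have := hc.length_add_rank_le hrank hs hx
  have := hN x
  omega

lemma completePaths_eq_of_le {n : ℕ} {s : S} (hn : N ≤ n + rank s) :
    completePaths E halt n s = completePaths E halt N s := by
  ext l
  rw [mem_completePaths_of_le hrank hN hn, mem_completePaths_of_le hrank hN (by omega)]

lemma sum_pairProd_completePaths (hhalt : ∀ s, halt s → ∀ s', ¬E s s') {P : S → S → ℝ}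
    (hP : IsForwardPolicy E halt P) {n : ℕ} {s : S} (hn : N ≤ n + rank s) :
    ∑ l ∈ completePaths E halt n s, pairProd P l = 1 := by
  induction n generalizing s with
  | zero =>
    have hs : halt s := by
      by_contra hs
      obtain ⟨s', hs'⟩ := exists_ne_zero_of_sum_ne_zero ((hP.2.2 s hs).trans_ne one_ne_zero)
      have := hrank _ _ (hP.2.1 _ _ hs'.2)
      have := hN s'
      omega
    rw [completePaths_of_halt hs (hhalt s hs), sum_singleton]
    rfl
  | succ n ih =>
    by_cases hs : halt s
    · rw [completePaths_of_halt hs (hhalt s hs), sum_singleton]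
      rfl
    calc ∑ l ∈ completePaths E halt (n + 1) s, pairProd P l
        = ∑ s' ∈ univ.filter (E s), P s s' * ∑ l ∈ completePaths E halt n s', pairProd P l := by
          rw [sum_completePaths_succ hs]
          refine sum_congr rfl fun s' _ => ?_
          rw [mul_sum]
          refine sum_congr rfl fun l hl => pairProd_cons_of_head? P s ?_
          exact (mem_completePaths.1 hl).1.1
      _ = ∑ s' ∈ univ.filter (E s), P s s' := sum_congr rfl fun s' hs' => by
          rw [ih (by have := hrank s s' (mem_filter.1 hs').2; omega), mul_one]
      _ = ∑ s', P s s' := sum_filter_of_ne fun s' _ => hP.2.1 s s'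
      _ = 1 := hP.2.2 s hs

end Ranked

end CompletePaths

section BackwardFlow
variable {S : Type*} [Fintype S] {E : S → S → Prop} {term : S → Prop} {s0 : S}
  {R : S → ℝ} {Z : ℝ} {PB : S → S → ℝ}

omit [Fintype S] in
lemma bTraj_of_getLast? {l : List S} {x : S} (hx : l.getLast? = some x) :
    bTraj R Z PB l = R x / Z * pairProd (fun a b => PB b a) l := by
  simp [bTraj, hx]

omit [Fintype S] in
lemma bTraj_cons_of_head? (a : S) {b : S} {l : List S} (hl : l.head? = some b) :
    bTraj R Z PB (a :: l) = PB b a * bTraj R Z PB l := by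
  cases l with
  | nil => cases hl
  | cons c l =>
    cases hl
    simp only [bTraj, List.getLast?_cons_cons, pairProd]
    ring

variable (E term R Z PB) in
def backwardFlow (N : ℕ) (s : S) : ℝ :=
  ∑ l ∈ completePaths E term N s, bTraj R Z PB l

variable (E term R Z PB) in
/-- At states of zero flow any child will do. -/
def inducedForwardPolicy (N : ℕ) (s s' : S) : ℝ :=
  if backwardFlow E term R Z PB N s = 0 then
    if h : ∃ s'', E s s'' then if s' = h.choose then 1 else 0 else 0
  else PB s' s * backwardFlow E term R Z PB N s' / backwardFlow E term R Z PB N s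

variable {rank : S → ℕ} {N : ℕ} (hterm : ∀ s, term s ↔ ∀ s', ¬E s s')
  (hrank : ∀ s s', E s s' → rank s < rank s') (hN : ∀ s, rank s ≤ N)
  (hPB : IsBackwardPolicy E s0 PB) (hR : ∀ x, term x → 0 ≤ R x) (hZ : 0 ≤ Z)

include hPB hR hZ in
lemma IsCompletePath.bTraj_nonneg {s : S} {l : List S} (hl : IsCompletePath E term s l) :
    0 ≤ bTraj R Z PB l := by
  obtain ⟨-, -, x, hx, hxt⟩ := hl
  rw [bTraj_of_getLast? hx]
  exact mul_nonneg (div_nonneg (hR x hxt) hZ) (pairProd_nonneg (fun a b => hPB.1 b a) l)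

include hPB hR hZ in
lemma backwardFlow_nonneg (s : S) : 0 ≤ backwardFlow E term R Z PB N s :=
  sum_nonneg fun _ hl => (mem_completePaths.1 hl).1.bTraj_nonneg hPB hR hZ

include hterm in
lemma backwardFlow_of_term {s : S} (hs : term s) : backwardFlow E term R Z PB N s = R s / Z := by
  rw [backwardFlow, completePaths_of_halt hs ((hterm s).1 hs), sum_singleton]
  simp [bTraj, pairProd]

include hrank hN hPB hR hZ in
lemma IsCompletePath.bTraj_eq_zero {s : S} {l : List S} (hl : IsCompletePath E term s l)
    (h0 : backwardFlow E term R Z PB N s = 0) : bTraj R Z PB l = 0 :=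
  (sum_eq_zero_iff_of_nonneg fun _ hl' => (mem_completePaths.1 hl').1.bTraj_nonneg hPB hR hZ).1
    h0 l ((mem_completePaths_of_le hrank hN (Nat.le_add_right N (rank s))).2 hl)

include hterm hrank hN hPB in
lemma backwardFlow_eq_sum {s : S} (hs : ¬term s) :
    backwardFlow E term R Z PB N s = ∑ s', PB s' s * backwardFlow E term R Z PB N s' := by
  obtain ⟨s₁, hs₁⟩ : ∃ s₁, E s s₁ := by simpa [hterm] using hs
  obtain ⟨n, rfl⟩ : ∃ n, N = n + 1 := Nat.exists_eq_add_one.2 ((Nat.zero_le _).trans_lt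
    ((hrank _ _ hs₁).trans_le (hN s₁)))
  calc backwardFlow E term R Z PB (n + 1) s
      = ∑ s' ∈ univ.filter (E s), ∑ l ∈ completePaths E term n s', bTraj R Z PB (s :: l) :=
        sum_completePaths_succ hs n _
    _ = ∑ s' ∈ univ.filter (E s), PB s' s * backwardFlow E term R Z PB (n + 1) s' := by
        refine sum_congr rfl fun s' hs' => ?_
        have hn : n + 1 ≤ n + rank s' := by have := hrank _ _ (mem_filter.1 hs').2; omega
        rw [backwardFlow, ← completePaths_eq_of_le hrank hN hn, mul_sum]
        exact sum_congr rfl fun l hl => bTraj_cons_of_head? s (mem_completePaths.1 hl).1.1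
    _ = ∑ s', PB s' s * backwardFlow E term R Z PB (n + 1) s' :=
        sum_filter_of_ne fun s' _ h => hPB.2.1 s' s (left_ne_zero_of_mul h)

include hterm hrank hN hPB hR hZ

lemma isForwardPolicy_inducedForwardPolicy :
    IsForwardPolicy E term (inducedForwardPolicy E term R Z PB N) := by
  have hF := backwardFlow_nonneg (N := N) hPB hR hZ
  refine ⟨fun s s' => ?_, fun s s' h => ?_, fun s hs => ?_⟩ <;> unfold inducedForwardPolicy at *
  · split_ifs
    exacts [zero_le_one, le_rfl, le_rfl, div_nonneg (mul_nonneg (hPB.1 _ _) (hF _)) (hF _)]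
  · split_ifs at h with h0 hsucc hs'
    · exact hs' ▸ hsucc.choose_spec
    · exact absurd rfl h
    · exact absurd rfl h
    · exact hPB.2.1 s' s (left_ne_zero_of_mul (div_ne_zero_iff.1 h).1)
  · have hsucc : ∃ s', E s s' := by simpa [hterm] using hs
    split_ifs with h0
    · rw [sum_ite_eq' univ _ (fun _ => (1 : ℝ)), if_pos (mem_univ _)]
    · rw [← sum_div, ← backwardFlow_eq_sum hterm hrank hN hPB hs, div_self h0]

lemma IsCompletePath.backwardFlow_mul_pairProd_inducedForwardPolicy {s : S} {l : List S}
    (hl : IsCompletePath E term s l) :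
    backwardFlow E term R Z PB N s * pairProd (inducedForwardPolicy E term R Z PB N) l =
      bTraj R Z PB l := by
  induction l generalizing s with
  | nil => cases hl.1
  | cons a l ih =>
    rcases l with _ | ⟨b, l⟩
    · obtain ⟨rfl, hs⟩ := isCompletePath_singleton.1 hl
      simp [backwardFlow_of_term hterm hs, pairProd, bTraj]
    obtain ⟨rfl, -, hbl⟩ := isCompletePath_cons_cons.1 hl
    by_cases h0 : backwardFlow E term R Z PB N a = 0
    · rw [h0, zero_mul, hl.bTraj_eq_zero hrank hN hPB hR hZ h0]
    · calc _ = PB b a * (backwardFlow E term R Z PB N b *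
              pairProd (inducedForwardPolicy E term R Z PB N) (b :: l)) := by
            simp only [pairProd, inducedForwardPolicy, if_neg h0]
            field_simp
        _ = bTraj R Z PB (a :: b :: l) := by rw [ih hbl, bTraj_cons_of_head? a rfl]

end BackwardFlow

section BackwardMarginals
variable {S : Type*} [Fintype S] [DecidableEq S] {E : S → S → Prop} {term : S → Prop} {s0 : S}
  {rank : S → ℕ} {N : ℕ} {R : S → ℝ} {Z : ℝ} {PB : S → S → ℝ}
  (hinit : ∀ s, ¬E s s0) (hrank : ∀ s s', E s s' → rank s < rank s') (hN : ∀ s, rank s ≤ N)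
  (hPB : IsBackwardPolicy E s0 PB)
include hinit hrank hN hPB

lemma sum_pairProd_swap_completePaths_filter {x : S} (hx : term x) :
    ∑ l ∈ (completePaths E term N s0).filter (fun l => l.getLast? = some x),
      pairProd (fun a b => PB b a) l = 1 := by
  have hPBrev : IsForwardPolicy (fun s s' => E s' s) (· = s0) PB := hPB
  have hrank' : ∀ s s', E s' s → N - rank s < N - rank s' := fun s s' h => by
    have := hrank _ _ h; have := hN s; omega
  have hN' : ∀ s, N - rank s ≤ N := fun s => Nat.sub_le N _
  have hrev : ∑ l ∈ completePaths (fun s s' => E s' s) (· = s0) N x, pairProd PB l = 1 :=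
    sum_pairProd_completePaths hrank' hN' (fun s (hs : s = s0) s' => hs ▸ hinit s') hPBrev
      (by omega)
  have hmem : ∀ l, l ∈ completePaths (fun s s' => E s' s) (· = s0) N x ↔
      l.reverse ∈ (completePaths E term N s0).filter (fun l => l.getLast? = some x) := by
    intro l
    rw [mem_filter, mem_completePaths_of_le hrank hN le_self_add,
      mem_completePaths_of_le hrank' hN' (by omega)]
    simp only [IsCompletePath, List.head?_reverse, List.getLast?_reverse, List.isChain_reverse,
      exists_eq_right]
    constructor
    · rintro ⟨hhead, hchain, hlast⟩
      exact ⟨⟨hlast, hchain, x, hhead, hx⟩, hhead⟩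
    · rintro ⟨⟨hlast, hchain, -⟩, hhead⟩
      exact ⟨hhead, hchain, hlast⟩
  rw [← hrev]
  exact sum_nbij' List.reverse List.reverse (fun l hl => (hmem _).2 (by rwa [List.reverse_reverse]))
    (fun l hl => (hmem l).1 hl) (fun l _ => l.reverse_reverse) (fun l _ => l.reverse_reverse)
    (fun l _ => (pairProd_reverse PB l).symm)

lemma sum_bTraj_completePaths_filter {x : S} (hx : term x) :
    ∑ l ∈ (completePaths E term N s0).filter (fun l => l.getLast? = some x), bTraj R Z PB l =
      R x / Z := by
  rw [sum_congr rfl fun l hl => bTraj_of_getLast? (mem_filter.1 hl).2, ← mul_sum,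
    sum_pairProd_swap_completePaths_filter hinit hrank hN hPB hx, mul_one]

lemma sum_bTraj_completePaths (hZ : Z = ∑ x ∈ univ.filter term, R x) (hZ0 : Z ≠ 0) :
    ∑ l ∈ completePaths E term N s0, bTraj R Z PB l = 1 := by
  have hlast : ∀ l ∈ completePaths E term N s0,
      l.getLast? ∈ (univ.filter term).map Function.Embedding.some := by
    intro l hl
    obtain ⟨-, -, x, hx, hxt⟩ := (mem_completePaths_of_le hrank hN le_self_add).1 hl
    simpa [hx] using hxt
  rw [← sum_fiberwise_of_maps_to hlast, sum_map]
  simp only [Function.Embedding.some_apply]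
  rw [sum_congr rfl fun x hx =>
      sum_bTraj_completePaths_filter hinit hrank hN hPB (mem_filter.1 hx).2,
    ← sum_div, ← hZ, div_self hZ0]

theorem exists_isForwardPolicy_pairProd_eq_bTraj (hterm : ∀ s, term s ↔ ∀ s', ¬E s s')
    (hR : ∀ x, term x → 0 ≤ R x) (hZ : Z = ∑ x ∈ univ.filter term, R x) (hZ0 : 0 < Z) :
    ∃ PF, IsForwardPolicy E term PF ∧
      ∀ l ∈ completePaths E term N s0, pairProd PF l = bTraj R Z PB l := by
  refine ⟨_, isForwardPolicy_inducedForwardPolicy hterm hrank hN hPB hR hZ0.le, fun l hl => ?_⟩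
  have hl' := (mem_completePaths_of_le hrank hN le_self_add).1 hl
  simpa [backwardFlow, sum_bTraj_completePaths hinit hrank hN hPB hZ hZ0.ne'] using
    hl'.backwardFlow_mul_pairProd_inducedForwardPolicy hterm hrank hN hPB hR hZ0.le

end BackwardMarginals

section Pinsker
open Set

lemma monotoneOn_add_one_mul_log_sub_two_mul :
    MonotoneOn (fun t : ℝ => (t + 1) * log t - 2 * (t - 1)) (Ioi 0) := by
  refine monotoneOn_of_hasDerivWithinAt_nonneg (convex_Ioi 0)
    (f' := fun t => log t + (t + 1) * t⁻¹ - 2) ?_ (fun t ht => ?_) (fun t ht => ?_)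
  · exact fun t ht => (((continuousAt_id.add continuousAt_const).mul
      (continuousAt_log (ne_of_gt ht))).sub (by fun_prop)).continuousWithinAt
  · rw [interior_Ioi] at ht
    have := (((hasDerivAt_id t).add_const 1).mul (hasDerivAt_log (ne_of_gt ht))).sub
      (((hasDerivAt_id t).sub_const 1).const_mul 2)
    exact (this.congr_deriv (by simp)).hasDerivWithinAt
  · rw [interior_Ioi] at ht
    have ht : (0 : ℝ) < t := ht
    have := one_sub_inv_le_log_of_pos ht
    have : (t + 1) * t⁻¹ = 1 + t⁻¹ := by field_simp
    linarith

lemma isMinOn_one_of_hasDerivAt {f f' : ℝ → ℝ} (hf : Continuous f)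
    (hf' : ∀ x > 0, HasDerivAt f (f' x) x) (hneg : ∀ x ∈ Set.Ioo 0 1, f' x ≤ 0)
    (hpos : ∀ x > 1, 0 ≤ f' x) : IsMinOn f (Ici 0) 1 := by
  refine isMinOn_iff.2 fun t ht => ?_
  rcases le_total t 1 with h | h
  · refine antitoneOn_of_hasDerivWithinAt_nonpos (convex_Icc 0 1) hf.continuousOn (f' := f')
      (fun x hx => ?_) (fun x hx => ?_) ⟨ht, h⟩ ⟨zero_le_one, le_rfl⟩ h
    · rw [interior_Icc] at hx ⊢
      exact (hf' x hx.1).hasDerivWithinAt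
    · exact hneg x (by rwa [interior_Icc] at hx)
  · refine monotoneOn_of_hasDerivWithinAt_nonneg (convex_Ici 1) hf.continuousOn (f' := f')
      (fun x hx => ?_) (fun x hx => ?_) self_mem_Ici h h
    · rw [interior_Ici] at hx ⊢
      exact (hf' x (zero_lt_one.trans hx)).hasDerivWithinAt
    · exact hpos x (by rwa [interior_Ici] at hx)

lemma three_mul_sq_sub_one_le_mul_klFun {t : ℝ} (ht : 0 ≤ t) :
    3 * (t - 1) ^ 2 ≤ (2 * t + 4) * klFun t := by
  have hψ := monotoneOn_add_one_mul_log_sub_two_mul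
  have hmin := isMinOn_one_of_hasDerivAt (f := fun t => (2 * t + 4) * klFun t - 3 * (t - 1) ^ 2)
    (f' := fun t => 4 * ((t + 1) * log t - 2 * (t - 1)))
    (by fun_prop (disch := exact continuous_klFun))
    (fun x hx => ?_) (fun x hx => ?_) (fun x hx => ?_)
  · simpa [klFun_one] using isMinOn_iff.1 hmin t ht
  · have := (((hasDerivAt_id' x).const_mul 2).add_const 4).mul (hasDerivAt_klFun (ne_of_gt hx))
      |>.sub ((((hasDerivAt_id' x).sub_const 1).pow 2).const_mul 3)
    refine this.congr_deriv ?_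
    simp only [klFun_apply]; ring
  · have := hψ hx.1 (mem_Ioi.2 one_pos) hx.2.le
    norm_num at this ⊢
    linarith
  · have := hψ (mem_Ioi.2 one_pos) (mem_Ioi.2 (one_pos.trans hx)) hx.le
    norm_num at this ⊢
    linarith

lemma mul_log_div_sub_add_eq_mul_klFun (a : ℝ) {b : ℝ} (hb : b ≠ 0) :
    a * log (a / b) - a + b = b * klFun (a / b) := by
  rw [klFun_apply]; field_simp; ring

lemma mul_log_div_sub_add_nonneg {a b : ℝ} (ha : 0 ≤ a) (hb : 0 ≤ b) (hab : b = 0 → a = 0) :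
    0 ≤ a * log (a / b) - a + b := by
  rcases hb.eq_or_lt with rfl | hb
  · simp [hab rfl]
  · rw [mul_log_div_sub_add_eq_mul_klFun a hb.ne']
    exact mul_nonneg hb.le (klFun_nonneg (div_nonneg ha hb.le))

lemma three_mul_sq_sub_le_mul_log_div_sub_add {a b : ℝ} (ha : 0 ≤ a) (hb : 0 ≤ b)
    (hab : b = 0 → a = 0) :
    3 * (a - b) ^ 2 ≤ (2 * a + 4 * b) * (a * log (a / b) - a + b) := by
  rcases hb.eq_or_lt with rfl | hb
  · simp [hab rfl]
  · obtain ⟨t, rfl⟩ : ∃ t, a = t * b := ⟨a / b, (div_mul_cancel₀ a hb.ne').symm⟩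
    have ht : 0 ≤ t := nonneg_of_mul_nonneg_left ha hb
    rw [mul_log_div_sub_add_eq_mul_klFun _ hb.ne', mul_div_cancel_right₀ t hb.ne']
    calc 3 * (t * b - b) ^ 2 = b ^ 2 * (3 * (t - 1) ^ 2) := by ring
      _ ≤ b ^ 2 * ((2 * t + 4) * klFun t) :=
        mul_le_mul_of_nonneg_left (three_mul_sq_sub_one_le_mul_klFun ht) (sq_nonneg b)
      _ = (2 * (t * b) + 4 * b) * (b * klFun t) := by ring

lemma sq_sum_abs_sub_le_two_mul_sum_mul_log_div {α : Type*} (A : Finset α) {p q : α → ℝ}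
    (hp : ∀ a ∈ A, 0 ≤ p a) (hq : ∀ a ∈ A, 0 ≤ q a) (hp1 : ∑ a ∈ A, p a = 1)
    (hq1 : ∑ a ∈ A, q a = 1) (hpq : ∀ a ∈ A, q a = 0 → p a = 0) :
    (∑ a ∈ A, |p a - q a|) ^ 2 ≤ 2 * ∑ a ∈ A, p a * log (p a / q a) := by
  have hCS := sum_sq_le_sum_mul_sum_of_sq_le_mul A
    (r := fun a => |p a - q a|) (f := fun a => p a * log (p a / q a) - p a + q a)
    (g := fun a => (2 * p a + 4 * q a) / 3)
    (fun a ha => mul_log_div_sub_add_nonneg (hp a ha) (hq a ha) (hpq a ha))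
    (fun a ha => by have := hp a ha; have := hq a ha; positivity)
    (fun a ha => by
      have := three_mul_sq_sub_le_mul_log_div_sub_add (hp a ha) (hq a ha) (hpq a ha)
      rw [sq_abs]; linarith)
  simp only [sum_add_distrib, sum_sub_distrib, ← sum_div, ← mul_sum, hp1, hq1] at hCS
  linarith

lemma ofReal_sq_sum_abs_sub_div_two_le_klDivFin {α : Type*} (A : Finset α) {p q : α → ℝ}
    (hp : ∀ a ∈ A, 0 ≤ p a) (hq : ∀ a ∈ A, 0 ≤ q a) (hp1 : ∑ a ∈ A, p a = 1)
    (hq1 : ∑ a ∈ A, q a = 1) :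
    ENNReal.ofReal ((∑ a ∈ A, |p a - q a|) ^ 2 / 2) ≤ klDivFin A p q := by
  unfold klDivFin
  split_ifs with hpq
  · exact ENNReal.ofReal_le_ofReal (by
      linarith [sq_sum_abs_sub_le_two_mul_sum_mul_log_div A hp hq hp1 hq1 hpq])
  · exact le_top

end Pinsker

lemma cauchySeq_of_sum_abs_sub_le {ι κ : Type*} [Fintype ι] [Fintype κ] {u : ℕ → ι → κ → ℝ}
    (h : ∀ ε > 0, ∃ n₀ : ℕ, ∀ n ≥ n₀, ∀ k : ℕ, ∑ i, ∑ j, |u n i j - u (n + k) i j| ≤ ε) :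
    CauchySeq u := by
  refine Metric.cauchySeq_iff'.2 fun ε hε => ?_
  obtain ⟨n₀, hn₀⟩ := h (ε / 2) (half_pos hε)
  refine ⟨n₀, fun n hn => ?_⟩
  obtain ⟨k, rfl⟩ := Nat.exists_eq_add_of_le hn
  refine lt_of_le_of_lt ?_ (half_lt_self hε)
  refine (dist_pi_le_iff (half_pos hε).le).2 fun i =>
    (dist_pi_le_iff (half_pos hε).le).2 fun j => ?_
  rw [Real.dist_eq, abs_sub_comm]
  calc |u n₀ i j - u (n₀ + k) i j| ≤ ∑ j, |u n₀ i j - u (n₀ + k) i j| :=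
        single_le_sum (f := fun j => |u n₀ i j - u (n₀ + k) i j|) (fun _ _ => abs_nonneg _)
          (mem_univ j)
    _ ≤ ∑ i, ∑ j, |u n₀ i j - u (n₀ + k) i j| :=
        single_le_sum (f := fun i => ∑ j, |u n₀ i j - u (n₀ + k) i j|)
          (fun _ _ => sum_nonneg fun _ _ => abs_nonneg _) (mem_univ i)
    _ ≤ ε / 2 := hn₀ n₀ le_rfl k

lemma isClosed_setOf_isBackwardPolicy {S : Type*} [Fintype S] (E : S → S → Prop) (s0 : S) :
    IsClosed {PB : S → S → ℝ | IsBackwardPolicy E s0 PB} := by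
  simp only [IsBackwardPolicy, Set.ofPred_and, Set.ofPred_forall]
  refine .inter ?_ (.inter ?_ ?_)
  · exact isClosed_iInter fun s' => isClosed_iInter fun s =>
      isClosed_le continuous_const (continuous_apply_apply s' s)
  · refine isClosed_iInter fun s' => isClosed_iInter fun s => ?_
    by_cases h : E s s'
    · simp [h]
    · simpa [h] using isClosed_eq (continuous_apply_apply s' s) continuous_const
  · exact isClosed_iInter fun s' => isClosed_iInter fun _ =>
      isClosed_eq (continuous_finsetSum _ fun s _ => continuous_apply_apply s' s) continuous_const

lemma sum_abs_cesaro_sub_le {α : Type*} (A : Finset α) (p : ℕ → α → ℝ) (r : α → ℝ) {n : ℕ}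
    (hn : n ≠ 0) :
    ∑ a ∈ A, |(∑ t ∈ range n, p t a) / n - r a| ≤ (∑ t ∈ range n, ∑ a ∈ A, |p t a - r a|) / n := by
  have hn : (0 : ℝ) < n := Nat.cast_pos.2 (Nat.pos_of_ne_zero hn)
  rw [sum_comm, sum_div]
  refine sum_le_sum fun a _ => ?_
  have hsub : (∑ t ∈ range n, p t a) / n - r a = (∑ t ∈ range n, (p t a - r a)) / n := by
    rw [sum_sub_distrib, sum_const, card_range, nsmul_eq_mul, sub_div,
      mul_div_cancel_left₀ _ hn.ne']
  rw [hsub, abs_div, abs_of_pos hn]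
  exact div_le_div_of_nonneg_right (abs_sum_le_sum_abs _ _) hn.le

lemma tendsto_sum_abs_cesaro_sub {α : Type*} (A : Finset α) {p q : ℕ → α → ℝ} {r : α → ℝ}
    (hpq : Tendsto (fun n : ℕ => (∑ t ∈ range n, ∑ a ∈ A, |p t a - q t a|) / n) atTop (𝓝 0))
    (hq : ∀ a ∈ A, Tendsto (fun t => q t a) atTop (𝓝 (r a))) :
    Tendsto (fun n : ℕ => ∑ a ∈ A, |(∑ t ∈ range n, p t a) / n - r a|) atTop (𝓝 0) := by
  have hqr : Tendsto (fun t => ∑ a ∈ A, |q t a - r a|) atTop (𝓝 0) := by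
    simpa using tendsto_finsetSum A fun a ha => ((hq a ha).sub_const (r a)).abs
  have hbound : ∀ᶠ n : ℕ in atTop, ∑ a ∈ A, |(∑ t ∈ range n, p t a) / n - r a| ≤
      (∑ t ∈ range n, ∑ a ∈ A, |p t a - q t a|) / n +
        (n : ℝ)⁻¹ * ∑ t ∈ range n, ∑ a ∈ A, |q t a - r a| := by
    filter_upwards [eventually_ne_atTop 0] with n hn
    refine (sum_abs_cesaro_sub_le A p r hn).trans ?_
    rw [inv_mul_eq_div, ← add_div, ← sum_add_distrib]
    gcongr with t _
    rw [← sum_add_distrib]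
    exact sum_le_sum fun a _ => abs_sub_le _ _ _
  exact squeeze_zero' (Eventually.of_forall fun n => sum_nonneg fun a _ => abs_nonneg _)
    hbound (by simpa using hpq.add hqr.cesaro)

lemma ofReal_sq_cesaro_sum_abs_sub_div_two_le {α : Type*} (A : Finset α) {p q : ℕ → α → ℝ}
    (hp : ∀ t, ∀ a ∈ A, 0 ≤ p t a) (hq : ∀ t, ∀ a ∈ A, 0 ≤ q t a)
    (hp1 : ∀ t, ∑ a ∈ A, p t a = 1) (hq1 : ∀ t, ∑ a ∈ A, q t a = 1) (n : ℕ) :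
    ENNReal.ofReal (((∑ t ∈ range n, ∑ a ∈ A, |p t a - q t a|) / n) ^ 2 / 2) ≤
      (∑ t ∈ range n, klDivFin A (p t) (q t)) / (n : ℝ≥0∞) := by
  rcases Nat.eq_zero_or_pos n with rfl | hn
  · simp
  have hn : (0 : ℝ) < n := Nat.cast_pos.2 hn
  calc _ ≤ ENNReal.ofReal ((∑ t ∈ range n, (∑ a ∈ A, |p t a - q t a|) ^ 2 / 2) / n) := by
        rw [← sum_div, div_right_comm]
        refine ENNReal.ofReal_le_ofReal (div_le_div_of_nonneg_right ?_ zero_le_two)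
        simpa using sum_div_card_sq_le_sum_sq_div_card (s := range n)
          (f := fun t => ∑ a ∈ A, |p t a - q t a|)
    _ = (∑ t ∈ range n, ENNReal.ofReal ((∑ a ∈ A, |p t a - q t a|) ^ 2 / 2)) / (n : ℝ≥0∞) := by
        rw [ENNReal.ofReal_div_of_pos hn, ENNReal.ofReal_natCast,
          ENNReal.ofReal_sum_of_nonneg fun t _ => by positivity]
    _ ≤ (∑ t ∈ range n, klDivFin A (p t) (q t)) / (n : ℝ≥0∞) := by
        gcongr with t
        exact ofReal_sq_sum_abs_sub_div_two_le_klDivFin A (hp t) (hq t) (hp1 t) (hq1 t)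

lemma tendsto_cesaro_sum_abs_sub_of_klDivFin {α : Type*} (A : Finset α) {p q : ℕ → α → ℝ}
    (hp : ∀ t, ∀ a ∈ A, 0 ≤ p t a) (hq : ∀ t, ∀ a ∈ A, 0 ≤ q t a)
    (hp1 : ∀ t, ∑ a ∈ A, p t a = 1) (hq1 : ∀ t, ∑ a ∈ A, q t a = 1)
    (hkl : Tendsto (fun n : ℕ => (∑ t ∈ range n, klDivFin A (p t) (q t)) / (n : ℝ≥0∞))
      atTop (𝓝 0)) :
    Tendsto (fun n : ℕ => (∑ t ∈ range n, ∑ a ∈ A, |p t a - q t a|) / n) atTop (𝓝 0) := by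
  set avg : ℕ → ℝ := fun n => (∑ t ∈ range n, ∑ a ∈ A, |p t a - q t a|) / n
  have hsq : Tendsto (fun n => avg n ^ 2 / 2) atTop (𝓝 0) := by
    have := (ENNReal.tendsto_toReal ENNReal.zero_ne_top).comp
      (tendsto_of_tendsto_of_tendsto_of_le_of_le tendsto_const_nhds hkl (fun _ => bot_le)
        (ofReal_sq_cesaro_sum_abs_sub_div_two_le A hp hq hp1 hq1))
    exact this.congr fun n => ENNReal.toReal_ofReal (div_nonneg (sq_nonneg _) zero_le_two)
  have hsq' : Tendsto (fun n => avg n ^ 2) atTop (𝓝 0) := by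
    simpa [mul_div_cancel₀] using hsq.const_mul 2
  have havg : ∀ n, 0 ≤ avg n := fun n =>
    div_nonneg (sum_nonneg fun t _ => sum_nonneg fun a _ => abs_nonneg _) n.cast_nonneg
  simpa only [Function.comp_def, sqrt_sq (havg _), sqrt_zero]
    using (continuous_sqrt.tendsto 0).comp hsq'

theorem tlm_convergence_general
    {S : Type*} [Fintype S] [DecidableEq S]
    (E : S → S → Prop) (s0 : S) (term : S → Prop)
    (hterm : ∀ s, term s ↔ ∀ s', ¬ E s s')
    (hinit : ∀ s, ¬ E s s0)
    (rank : S → ℕ) (hrank : ∀ s s', E s s' → rank s < rank s')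
    (T : Finset (List S))
    (hT : ∀ l, l ∈ T ↔
      (l.head? = some s0 ∧ l.Chain' E ∧ ∃ x, l.getLast? = some x ∧ term x))
    (R : S → ℝ) (hR : ∀ x, term x → 0 < R x)
    (Z : ℝ) (hZ : Z = ∑ x ∈ Finset.univ.filter term, R x) (hZpos : 0 < Z)
    (PFseq PBseq : ℕ → S → S → ℝ)
    (hPF : ∀ t, IsForwardPolicy E term (PFseq t))
    (hPB : ∀ t, IsBackwardPolicy E s0 (PBseq t))
    -- (1) stability of backward updates: sup_{t ≥ 0} ‖PB^T − PB^{T+t}‖₁ → 0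
    (hstable : ∀ ε > (0 : ℝ), ∃ T0 : ℕ, ∀ Tn ≥ T0, ∀ t : ℕ,
      ∑ s' : S, ∑ s : S, |PBseq Tn s' s - PBseq (Tn + t) s' s| ≤ ε)
    -- (2) the average regret tends to 0
    (hregret : Filter.Tendsto
      (fun Tn : ℕ =>
        (∑ t ∈ Finset.range Tn,
          klDivFin T (fun l => pairProd (PFseq t) l)
            (fun l => bTraj R Z (PBseq t) l)) / (Tn : ℝ≥0∞))
      Filter.atTop (nhds 0)) :
    ∃ PFstar : S → S → ℝ, IsForwardPolicy E term PFstar ∧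
      -- PF* satisfies trajectory balance with some backward policy ...
      (∃ PBstar : S → S → ℝ, IsBackwardPolicy E s0 PBstar ∧
        ∀ l ∈ T, pairProd PFstar l = bTraj R Z PBstar l) ∧
      -- ... hence induces the marginal R(x)/Z over terminal states ...
      (∀ x, term x →
        ∑ l ∈ T.filter (fun l => l.getLast? = some x), pairProd PFstar l = R x / Z) ∧
      -- ... and the Cesàro averages of the forward trajectory distributions
      -- converge to P^{PF*} in L1
      Filter.Tendsto
        (fun Tn : ℕ => ∑ l ∈ T,
          |(∑ t ∈ Finset.range Tn, pairProd (PFseq t) l) / (Tn : ℝ) - pairProd PFstar l|)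
        Filter.atTop (nhds 0) := by
  obtain ⟨N, hN⟩ : ∃ N, ∀ s, rank s ≤ N := ⟨univ.sup rank, fun s => le_sup (mem_univ s)⟩
  have hpaths {l : List S} : l ∈ completePaths E term N s0 ↔ IsCompletePath E term s0 l :=
    mem_completePaths_of_le hrank hN le_self_add
  obtain rfl : T = completePaths E term N s0 := ext fun l => (hT l).trans hpaths.symm
  have hR' : ∀ x, term x → 0 ≤ R x := fun x hx => (hR x hx).le
  obtain ⟨PBstar, hlim⟩ := cauchySeq_tendsto_of_complete (cauchySeq_of_sum_abs_sub_le hstable)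
  have hPBstar : IsBackwardPolicy E s0 PBstar :=
    (isClosed_setOf_isBackwardPolicy E s0).mem_of_tendsto hlim (Eventually.of_forall hPB)
  obtain ⟨PFstar, hPFstar, hbalance⟩ :=
    exists_isForwardPolicy_pairProd_eq_bTraj hinit hrank hN hPBstar hterm hR' hZ hZpos
  refine ⟨PFstar, hPFstar, ⟨PBstar, hPBstar, hbalance⟩, fun x hx => ?_, ?_⟩
  · rw [sum_congr rfl fun l hl => hbalance l (mem_filter.1 hl).1]
    exact sum_bTraj_completePaths_filter hinit hrank hN hPBstar hx
  have hregret' := tendsto_cesaro_sum_abs_sub_of_klDivFin _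
    (fun t _ _ => pairProd_nonneg (hPF t).1 _)
    (fun t _ hl => (hpaths.1 hl).bTraj_nonneg (hPB t) hR' hZpos.le)
    (fun t => sum_pairProd_completePaths hrank hN (fun s hs => (hterm s).1 hs) (hPF t) le_self_add)
    (fun t => sum_bTraj_completePaths hinit hrank hN (hPB t) hZ hZpos.ne') hregret
  refine (tendsto_sum_abs_cesaro_sub _ hregret' fun l _ =>
    ((continuous_bTraj R Z l).tendsto PBstar).comp hlim).congr fun n => ?_
  exact sum_congr rfl fun l hl => by rw [hbalance l hl]

/-- Convergence of trajectory likelihood maximization: if the backward policy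
sequence is stable (uniformly Cauchy in L1) and the average regret
`(1/T) Σ_{t<T} KL(P^{PF_t} ‖ P^{PB_t})` tends to `0`, then there is a proper
GFlowNet forward policy `PF*` (satisfying trajectory balance, hence inducing the
marginal `R(x)/Z`) such that the Cesàro averages of the forward trajectory
distributions converge to `P^{PF*}` in L1. -/
theorem tlm_convergence
    {S : Type*} [Fintype S] [DecidableEq S]
    (E : S → S → Prop) (s0 : S) (term : S → Prop)
    (hterm : ∀ s, term s ↔ ∀ s', ¬ E s s')
    (hinit : ∀ s, ¬ E s s0)
    (hreach : ∀ s, Relation.ReflTransGen E s0 s)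
    (rank : S → ℕ) (hrank : ∀ s s', E s s' → rank s < rank s')
    (T : Finset (List S))
    (hT : ∀ l, l ∈ T ↔
      (l.head? = some s0 ∧ l.Chain' E ∧ ∃ x, l.getLast? = some x ∧ term x))
    (R : S → ℝ) (hR : ∀ x, term x → 0 < R x)
    (Z : ℝ) (hZ : Z = ∑ x ∈ Finset.univ.filter term, R x) (hZpos : 0 < Z)
    (PFseq PBseq : ℕ → S → S → ℝ)
    (hPF : ∀ t, IsForwardPolicy E term (PFseq t))
    (hPB : ∀ t, IsBackwardPolicy E s0 (PBseq t))
    -- (1) stability of backward updates: sup_{t ≥ 0} ‖PB^T − PB^{T+t}‖₁ → 0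
    (hstable : ∀ ε > (0 : ℝ), ∃ T0 : ℕ, ∀ Tn ≥ T0, ∀ t : ℕ,
      ∑ s' : S, ∑ s : S, |PBseq Tn s' s - PBseq (Tn + t) s' s| ≤ ε)
    -- (2) the average regret tends to 0
    (hregret : Filter.Tendsto
      (fun Tn : ℕ =>
        (∑ t ∈ Finset.range Tn,
          klDivFin T (fun l => pairProd (PFseq t) l)
            (fun l => bTraj R Z (PBseq t) l)) / (Tn : ℝ≥0∞))
      Filter.atTop (nhds 0)) :
    ∃ PFstar : S → S → ℝ, IsForwardPolicy E term PFstar ∧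
      -- PF* satisfies trajectory balance with some backward policy ...
      (∃ PBstar : S → S → ℝ, IsBackwardPolicy E s0 PBstar ∧
        ∀ l ∈ T, pairProd PFstar l = bTraj R Z PBstar l) ∧
      -- ... hence induces the marginal R(x)/Z over terminal states ...
      (∀ x, term x →
        ∑ l ∈ T.filter (fun l => l.getLast? = some x), pairProd PFstar l = R x / Z) ∧
      -- ... and the Cesàro averages of the forward trajectory distributions
      -- converge to P^{PF*} in L1
      Filter.Tendsto
        (fun Tn : ℕ => ∑ l ∈ T,
          |(∑ t ∈ Finset.range Tn, pairProd (PFseq t) l) / (Tn : ℝ) - pairProd PFstar l|)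
        Filter.atTop (nhds 0) :=
  tlm_convergence_general E s0 term hterm hinit rank hrank T hT R hR Z hZ hZpos PFseq PBseq hPF hPB
    hstable hregret
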